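/- arXiv:1305.4463 — 3 statements merged into one kernel-verified Lean document; each statement's English description precedes it below -/
import Mathlib

section
/- For 2 ≤ j ≤ n−1, if f = (f_1,...,f_n) is a nonnegative equilibrium with ∑_k f_k = ρ, then f_j satisfies the quadratic equation −ρ f_j² + [(1−3ρ) S_{j−1} + ρ(2ρ−1)] f_j + (1−ρ) f_{j−1} (ρ − S_{j−2}) = 0, where S_m = ∑_{k=1}^m f_k. -/
/-!
Below the last class, the quadratic form `∑ h, ∑ k, tab n ρ h k j * f h * f k` only sees row `j`,
row `j - 1` and column `j` of the table, so it evaluates to products of `f j`, `f (j - 1)` with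
head sums `∑ k < m, f k` and tail sums `∑ k ≥ m, f k`. Trading each tail sum for the total mass
`ρ` minus a head sum turns the equilibrium equation at `j` into the quadratic.
-/

open Finset

/-- The prototypical table of games (indices in `Fin n`, 0-based; last index is class n). -/
def tab (n : ℕ) (ρ : ℝ) (h k j : Fin n) : ℝ :=
  if h ≤ k then
    if h.val = n - 1 then (if j = h then 1 else 0)
    else (if j = h then ρ else 0) + (if j.val = h.val + 1 then 1 - ρ else 0)
  else (if j = k then ρ else 0) + (if j = h then 1 - ρ else 0)

theorem Finset.sum_Ici_eq_sub_sum_Iio {α M : Type*} [LinearOrder α] [Fintype α]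
    [LocallyFiniteOrderTop α] [LocallyFiniteOrderBot α] [AddCommGroup M] (f : α → M) (a : α) :
    ∑ x ∈ Ici a, f x = ∑ x, f x - ∑ x ∈ Iio a, f x := by
  rw [← filter_le_eq_Ici, ← filter_gt_eq_Iio, eq_sub_iff_add_eq,
    ← sum_filter_add_sum_filter_not univ (a ≤ ·)]
  simp only [not_le]

theorem Finset.sum_Ioi_eq_sum_Ici_sub {α M : Type*} [PartialOrder α] [LocallyFiniteOrderTop α]
    [AddCommGroup M] (f : α → M) (a : α) :
    ∑ x ∈ Ioi a, f x = ∑ x ∈ Ici a, f x - f a := by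
  rw [← add_sum_Ioi_eq_sum_Ici, add_sub_cancel_left]

theorem Fin.filter_val_lt_eq_Iio {n : ℕ} (j : Fin n) :
    univ.filter (fun k : Fin n => k.val < j.val) = Iio j := by
  ext k
  simp only [mem_filter, mem_univ, true_and, mem_Iio, Fin.lt_def]

section

variable {n : ℕ} {ρ : ℝ} {p j : Fin n}

theorem tab_eq_of_ne_last (hp : p.val + 1 = j.val) (hj : j.val ≠ n - 1) (h k : Fin n) :
    tab n ρ h k j =
      (if h = j then (if h ≤ k then ρ else 1 - ρ) else 0)
        + (if h = p ∧ h ≤ k then 1 - ρ else 0)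
        + (if k = j ∧ k < h then ρ else 0) := by
  unfold tab
  simp only [Fin.ext_iff, Fin.le_def, Fin.lt_def]
  split_ifs <;> first | omega | ring

theorem sum_sum_tab_mul_mul (f : Fin n → ℝ) (hp : p.val + 1 = j.val) (hj : j.val ≠ n - 1) :
    ∑ h, ∑ k, tab n ρ h k j * f h * f k =
      ρ * f j * ∑ k ∈ Ici j, f k + (1 - ρ) * f j * ∑ k ∈ Iio j, f k
        + (1 - ρ) * f p * ∑ k ∈ Ici p, f k + ρ * f j * ∑ h ∈ Ioi j, f h := by
  simp only [tab_eq_of_ne_last hp hj, add_mul, sum_add_distrib, ite_mul, zero_mul, ite_and]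
  simp only [sum_ite_irrel, sum_const_zero, sum_ite_eq', mem_univ, if_true, sum_ite, not_le,
    add_zero, filter_le_eq_Ici, filter_lt_eq_Ioi, filter_gt_eq_Iio, ← mul_sum, ← sum_mul]
  ring

end

/-- `i` is the 0-based index of the informal `f_j`, so `i.val = j - 1`. -/
theorem middle_component_quadratic
    (n : ℕ) (ρ : ℝ)
    (f : Fin n → ℝ)
    (hmass : ∑ j, f j = ρ)
    (heq : ∀ j : Fin n, ∑ h, ∑ k, tab n ρ h k j * f h * f k = ρ * f j)
    (i : Fin n) (hi1 : 1 ≤ i.val) (hi2 : i.val ≤ n - 2)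
    (S : ℕ → ℝ) (hS : ∀ m, S m = ∑ k ∈ univ.filter (fun k : Fin n => k.val < m), f k) :
    -ρ * (f i) ^ 2 + ((1 - 3 * ρ) * S i.val + ρ * (2 * ρ - 1)) * f i
      + (1 - ρ) * f ⟨i.val - 1, by omega⟩ * (ρ - S (i.val - 1)) = 0 := by
  set p : Fin n := ⟨i.val - 1, by omega⟩
  have hpi : p.val = i.val - 1 := rfl
  have hp : p.val + 1 = i.val := by omega
  have hE := heq i
  rw [sum_sum_tab_mul_mul f hp (by omega), sum_Ioi_eq_sum_Ici_sub,
    sum_Ici_eq_sub_sum_Iio, sum_Ici_eq_sub_sum_Iio, hmass, ← Fin.filter_val_lt_eq_Iio,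
    ← Fin.filter_val_lt_eq_Iio, ← hS, ← hS, hpi] at hE
  linear_combination hE
end

section
/- The simplex {f ∈ ℝⁿ : f_j ≥ 0 for all j, ∑_j f_j = ρ} is forward-invariant for the system df_j/dt = η(∑_{h,k} A_{hk}^j f_h f_k − ρ f_j): any solution starting in the simplex with total mass ρ remains nonnegative with total mass ρ for all t ≥ 0. -/
/-!
Summing the equations and using `∑_j A_{hk}^j = 1` gives the closed scalar equation
`S' = η S (S - ρ)` for the mass `S = ∑_j f_j`, whose only solution with `S(0) = ρ` is constant
(Grönwall on compact intervals).

For nonnegativity, the gain term is nonnegative on the orthant, but only slightly negative just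
outside it: if `f_k ≥ -δ` for all `k` and `f ≤ M`, then `∑ A_{hk}^j f_h f_k ≥ -n² M δ`. Hence
`g_j = f_j + ε e^{K t}` with `K = η n² M + 1` has strictly positive derivative whenever it reaches
`0` from the closed orthant, so `g` never leaves it; letting `ε → 0` gives `f ≥ 0`.
-/

open Set Filter Topology Real

theorem HasDerivWithinAt.eventually_lt_right {g : ℝ → ℝ} {d t : ℝ}
    (hg : HasDerivWithinAt g d (Ici t) t) (hd : 0 < d) : ∀ᶠ s in 𝓝[>] t, g t < g s := by
  have hslope : Tendsto (slope g t) (𝓝[>] t) (𝓝 d) :=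
    (hasDerivWithinAt_iff_tendsto_slope' Set.self_notMem_Ioi).mp
      (hasDerivWithinAt_Ioi_iff_Ici.mpr hg)
  filter_upwards [hslope.eventually_const_lt hd, self_mem_nhdsWithin] with s hpos hts
  rw [slope_def_field, div_pos_iff_of_pos_right (sub_pos.mpr hts)] at hpos
  linarith

theorem nonneg_of_hasDerivWithinAt_pos_of_eq_zero {ι : Type*} [Finite ι] {g : ℝ → ι → ℝ}
    {a b : ℝ} (hg : ∀ j, ContinuousOn (fun t => g t j) (Icc a b)) (ha : ∀ j, 0 ≤ g a j)
    (hboundary : ∀ t ∈ Ico a b, (∀ k, 0 ≤ g t k) → ∀ j, g t j = 0 →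
      ∃ d > 0, HasDerivWithinAt (fun s => g s j) d (Ici t) t) :
    ∀ t ∈ Icc a b, ∀ j, 0 ≤ g t j := by
  set s := {t | ∀ j, 0 ≤ g t j}
  have hclosed : IsClosed (s ∩ Icc a b) := by
    have hs : s ∩ Icc a b = Icc a b ∩ ⋂ j, Icc a b ∩ (fun t => g t j) ⁻¹' Ici 0 := by
      ext t; simp [s]; aesop
    rw [hs]
    exact isClosed_Icc.inter <| isClosed_iInter fun j =>
      (hg j).preimage_isClosed_of_isClosed isClosed_Icc isClosed_Ici
  refine fun t ht => hclosed.Icc_subset_of_forall_mem_nhdsWithin ha ?_ ht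
  rintro t ⟨hts, htab⟩
  refine eventually_all.mpr fun j => ?_
  rcases (hts j).eq_or_lt with hzero | hpos
  · obtain ⟨d, hd, hderiv⟩ := hboundary t htab hts j hzero.symm
    filter_upwards [hderiv.eventually_lt_right hd] with s hs
    linarith
  · have hIcc : Icc a b ∈ 𝓝[>] t :=
      mem_of_superset (Ico_mem_nhdsGT htab.2) fun s hs => ⟨htab.1.trans hs.1, hs.2.le⟩
    exact (((hg j) t (Ico_subset_Icc_self htab)).mono_of_mem_nhdsWithin hIcc).eventually_const_lt
      hpos |>.mono fun s hs => hs.le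

theorem neg_mul_le_mul_of_neg_le {x y M δ : ℝ} (hM : 0 ≤ M) (hδ : 0 ≤ δ) (hx : -δ ≤ x)
    (hy : -δ ≤ y) (hxM : x ≤ M) (hyM : y ≤ M) : -(M * δ) ≤ x * y := by
  rcases le_total 0 x with hx0 | hx0 <;> rcases le_total 0 y with hy0 | hy0 <;>
    nlinarith [mul_nonneg hM hδ]

section Gain

variable {ι : Type*} [Fintype ι]

def gain (A : ι → ι → ι → ℝ) (x : ι → ℝ) (j : ι) : ℝ := ∑ h, ∑ k, A h k j * x h * x k

variable {A : ι → ι → ι → ℝ}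

theorem sum_gain (hA_sum : ∀ h k, ∑ j, A h k j = 1) (x : ι → ℝ) :
    ∑ j, gain A x j = (∑ j, x j) ^ 2 := by
  calc ∑ j, gain A x j = ∑ h, ∑ k, (∑ j, A h k j) * x h * x k := by
        simp only [gain, Finset.sum_mul]
        rw [Finset.sum_comm]
        exact Finset.sum_congr rfl fun h _ => Finset.sum_comm
    _ = (∑ j, x j) ^ 2 := by simp [hA_sum, sq, Finset.sum_mul_sum]

theorem neg_le_gain (hA_nonneg : ∀ h k j, 0 ≤ A h k j) (hA_sum : ∀ h k, ∑ j, A h k j = 1)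
    {x : ι → ℝ} {M δ : ℝ} (hM : 0 ≤ M) (hδ : 0 ≤ δ) (hlow : ∀ k, -δ ≤ x k) (hup : ∀ k, x k ≤ M)
    (j : ι) : -(Fintype.card ι ^ 2 * M * δ) ≤ gain A x j := by
  have hA_le_one : ∀ h k, A h k j ≤ 1 := fun h k =>
    hA_sum h k ▸ Finset.single_le_sum (fun i _ => hA_nonneg h k i) (Finset.mem_univ j)
  have hterm : ∀ h k, -(M * δ) ≤ A h k j * x h * x k := fun h k => by
    have hprod := neg_mul_le_mul_of_neg_le hM hδ (hlow h) (hlow k) (hup h) (hup k)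
    nlinarith [hA_nonneg h k j, hA_le_one h k, mul_nonneg hM hδ]
  calc -(Fintype.card ι ^ 2 * M * δ) = ∑ _h : ι, ∑ _k : ι, -(M * δ) := by simp; ring
    _ ≤ gain A x j := Finset.sum_le_sum fun h _ => Finset.sum_le_sum fun k _ => hterm h k

end Gain

theorem exists_nonneg_forall_le_of_continuousOn {ι : Type*} [Fintype ι] {f : ℝ → ι → ℝ}
    {a b : ℝ} (hf : ∀ j, ContinuousOn (fun t => f t j) (Icc a b)) :
    ∃ M, 0 ≤ M ∧ ∀ t ∈ Icc a b, ∀ j, f t j ≤ M := by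
  obtain ⟨C, hC⟩ := isCompact_Icc.exists_bound_of_continuousOn (continuousOn_pi.mpr hf)
  exact ⟨max C 0, le_max_right C 0, fun t ht j =>
    (le_abs_self _).trans <| (norm_le_pi_norm (f t) j).trans <| (hC t ht).trans (le_max_left C 0)⟩

section Solution

variable {ι : Type*} [Fintype ι] {A : ι → ι → ι → ℝ} {η ρ : ℝ} {f : ℝ → ι → ℝ} {a b : ℝ}

theorem sum_eq_of_hasDerivWithinAt_gain (hA_sum : ∀ h k, ∑ j, A h k j = 1)
    (hcont : ∀ j, ContinuousOn (fun t => f t j) (Icc a b))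
    (hderiv : ∀ t ∈ Ico a b, ∀ j,
      HasDerivWithinAt (fun s => f s j) (η * (gain A (f t) j - ρ * f t j)) (Ici t) t)
    (ha : ∑ j, f a j = ρ) : ∀ t ∈ Icc a b, ∑ j, f t j = ρ := by
  set S : ℝ → ℝ := fun t => ∑ j, f t j
  have hS_cont : ContinuousOn S (Icc a b) := continuousOn_finsetSum _ fun j _ => hcont j
  have hS_deriv : ∀ t ∈ Ico a b,
      HasDerivWithinAt (fun t => S t - ρ) (η * S t * (S t - ρ)) (Ici t) t := fun t ht => by
    have hsum := HasDerivWithinAt.fun_sum fun j (_ : j ∈ Finset.univ) => hderiv t ht j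
    rw [← Finset.mul_sum, Finset.sum_sub_distrib, sum_gain hA_sum, ← Finset.mul_sum] at hsum
    exact (hsum.sub_const ρ).congr_deriv (by ring)
  obtain ⟨C, hC⟩ := isCompact_Icc.exists_bound_of_continuousOn hS_cont
  have hzero := eq_zero_of_abs_deriv_le_mul_abs_self_of_eq_zero_right
    (hS_cont.sub continuousOn_const) hS_deriv (sub_eq_zero.mpr ha) (K := |η| * C) fun t ht => by
      rw [norm_mul, norm_mul, Real.norm_eq_abs η, mul_assoc, mul_assoc]
      exact mul_le_mul_of_nonneg_left
        (mul_le_mul_of_nonneg_right (hC t (Ico_subset_Icc_self ht)) (norm_nonneg _)) (abs_nonneg η)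
  exact fun t ht => sub_eq_zero.mp (hzero t ht)

theorem nonneg_of_hasDerivWithinAt_gain (hη : 0 ≤ η) (hρ : 0 ≤ ρ)
    (hA_nonneg : ∀ h k j, 0 ≤ A h k j) (hA_sum : ∀ h k, ∑ j, A h k j = 1)
    (hcont : ∀ j, ContinuousOn (fun t => f t j) (Icc a b))
    (hderiv : ∀ t ∈ Ico a b, ∀ j,
      HasDerivWithinAt (fun s => f s j) (η * (gain A (f t) j - ρ * f t j)) (Ici t) t)
    (ha : ∀ j, 0 ≤ f a j) : ∀ t ∈ Icc a b, ∀ j, 0 ≤ f t j := by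
  obtain ⟨M, hM, hfM⟩ := exists_nonneg_forall_le_of_continuousOn hcont
  set c := (Fintype.card ι : ℝ) ^ 2 * M
  set K := η * c + 1
  have hperturbed : ∀ ε > 0, ∀ t ∈ Icc a b, ∀ j, 0 ≤ f t j + ε * exp (K * t) := by
    intro ε hε
    refine nonneg_of_hasDerivWithinAt_pos_of_eq_zero (g := fun t j => f t j + ε * exp (K * t))
      (fun j => (hcont j).add (by fun_prop)) (fun j => add_nonneg (ha j) (by positivity)) ?_
    intro t ht hnonneg j hzero
    set δ := ε * exp (K * t)
    have hδ : 0 < δ := by positivity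
    have hfield : -(η * (c * δ)) ≤ η * (gain A (f t) j - ρ * f t j) := by
      have hgain := neg_le_gain hA_nonneg hA_sum hM hδ.le (fun k => by linarith [hnonneg k])
        (fun k => hfM t (Ico_subset_Icc_self ht) k) j
      have hfj : f t j = -δ := by linarith
      rw [hfj, ← mul_neg]
      exact mul_le_mul_of_nonneg_left (by nlinarith [mul_nonneg hρ hδ.le]) hη
    have hK : δ * K = η * (c * δ) + δ := by ring
    refine ⟨η * (gain A (f t) j - ρ * f t j) + δ * K, by linarith, ?_⟩
    have hexp : HasDerivAt (fun s => ε * exp (K * s)) (δ * K) t := by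
      simpa [δ, mul_assoc] using (((hasDerivAt_id t).const_mul K).exp).const_mul ε
    exact (hderiv t ht j).add hexp.hasDerivWithinAt
  intro t ht j
  have hE : 0 < exp (K * t) := exp_pos _
  refine le_of_forall_pos_le_add fun ε hε => ?_
  have := hperturbed (ε / exp (K * t)) (by positivity) t ht j
  rwa [div_mul_cancel₀ _ hE.ne'] at this

end Solution

theorem simplex_forward_invariant_general
    (n : ℕ) (η : ℝ) (hη : 0 < η) (ρ : ℝ) (hρ : 0 ≤ ρ)
    (A : Fin n → Fin n → Fin n → ℝ)
    (hA_nonneg : ∀ h k j, 0 ≤ A h k j)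
    (hA_sum : ∀ h k, ∑ j, A h k j = 1)
    (f : ℝ → Fin n → ℝ)
    (hf : ∀ j : Fin n, ∀ t : ℝ, 0 ≤ t →
      HasDerivAt (fun s => f s j)
        (η * ((∑ h, ∑ k, A h k j * f t h * f t k) - ρ * f t j)) t)
    (hinit_nonneg : ∀ j, 0 ≤ f 0 j) (hinit_mass : ∑ j, f 0 j = ρ) :
    ∀ t : ℝ, 0 ≤ t → (∀ j, 0 ≤ f t j) ∧ ∑ j, f t j = ρ := by
  intro t ht
  have hcont : ∀ j, ContinuousOn (fun s => f s j) (Icc 0 t) := fun j s hs =>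
    (hf j s hs.1).continuousAt.continuousWithinAt
  have hderiv : ∀ s ∈ Ico 0 t, ∀ j,
      HasDerivWithinAt (fun s => f s j) (η * (gain A (f s) j - ρ * f s j)) (Ici s) s :=
    fun s hs j => (hf j s hs.1).hasDerivWithinAt
  have ht_mem : t ∈ Icc 0 t := ⟨ht, le_rfl⟩
  exact ⟨nonneg_of_hasDerivWithinAt_gain hη.le hρ hA_nonneg hA_sum hcont hderiv hinit_nonneg
    t ht_mem, sum_eq_of_hasDerivWithinAt_gain hA_sum hcont hderiv hinit_mass t ht_mem⟩

/-- the simplex `{f : f_j ≥ 0, ∑ f_j = ρ}` is forward-invariant for the system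
`f_j' = η(∑_{h,k} A_{hk}^j f_h f_k − ρ f_j)`. -/
theorem simplex_forward_invariant
    (n : ℕ) (hn : 1 ≤ n) (η : ℝ) (hη : 0 < η) (ρ : ℝ) (hρ : 0 ≤ ρ)
    (A : Fin n → Fin n → Fin n → ℝ)
    (hA_nonneg : ∀ h k j, 0 ≤ A h k j)
    (hA_sum : ∀ h k, ∑ j, A h k j = 1)
    (f : ℝ → Fin n → ℝ)
    (hf : ∀ j : Fin n, ∀ t : ℝ, 0 ≤ t →
      HasDerivAt (fun s => f s j)
        (η * ((∑ h, ∑ k, A h k j * f t h * f t k) - ρ * f t j)) t)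
    (hinit_nonneg : ∀ j, 0 ≤ f 0 j) (hinit_mass : ∑ j, f 0 j = ρ) :
    ∀ t : ℝ, 0 ≤ t → (∀ j, 0 ≤ f t j) ∧ ∑ j, f t j = ρ :=
  simplex_forward_invariant_general n η hη ρ hρ A hA_nonneg hA_sum f hf hinit_nonneg hinit_mass
end

section
/- For the general spatially homogeneous system with bounded interaction rate, two solutions with the same density satisfy the a priori continuity estimate ‖g(t) − f(t)‖₁ ≤ e^{3η₀ t} ‖g⁰ − f⁰‖₁ for all t > 0, where η₀ = sup_{ρ∈[0,1]} η[ρ]. -/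
open Finset Set Filter Topology Real

/-!
Write `F = interactionField A η ρ`. Solutions stay nonnegative: if a component of `f + ε e^{Mt}`
reached zero first at some time, where that component of `f` equals `-δ`, then all components
are `≥ -δ` there, so the gain term is `≥ -Cδ` while the loss term is `≥ 0`; for `M > C` the
perturbed component would be increasing, which is impossible. Summing the equation over `j`
and using `∑ⱼ Aʲₕₖ = 1` gives `m' = η m (m - ρ)` for the mass `m`, hence `m ≡ ρ`.
From `yₕyₖ - xₕxₖ = yₕ(yₖ - xₖ) + (yₕ - xₕ)xₖ`, `F` is Lipschitz in `ℓ¹` with constant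
`η (‖x‖₁ + ‖y‖₁ + ρ) = 3ηρ ≤ 3η₀` on nonnegative vectors of mass `ρ`, and Grönwall's inequality
in `PiLp 1` concludes.
-/

theorem neg_mul_le_mul_mul_of_neg_le {a x y B δ : ℝ} (ha0 : 0 ≤ a) (ha1 : a ≤ 1) (hδ : 0 ≤ δ)
    (hx : -δ ≤ x) (hy : -δ ≤ y) (hxB : |x| ≤ B) (hyB : |y| ≤ B) : -(B * δ) ≤ a * x * y := by
  have hxy : -(B * δ) ≤ x * y := by
    rcases abs_le.1 hxB with ⟨_, _⟩
    rcases abs_le.1 hyB with ⟨_, _⟩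
    rcases le_total 0 x with h | h <;> rcases le_total 0 y with h' | h' <;> nlinarith
  rcases le_total 0 (x * y) with h | h <;> nlinarith [mul_nonneg hδ (abs_nonneg x)]

theorem sum_abs_mul_sub_mul_le {ι : Type*} [Fintype ι] (x y : ι → ℝ) :
    ∑ h, ∑ k, |y h * y k - x h * x k| ≤ (∑ j, |y j| + ∑ j, |x j|) * ∑ j, |y j - x j| :=
  calc ∑ h, ∑ k, |y h * y k - x h * x k|
      ≤ ∑ h, ∑ k, (|y h| * |y k - x k| + |y h - x h| * |x k|) := by
        gcongr with h _ k _
        calc |y h * y k - x h * x k| = |y h * (y k - x k) + (y h - x h) * x k| := by ring_nf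
          _ ≤ _ := (abs_add_le _ _).trans_eq (by rw [abs_mul, abs_mul])
    _ = (∑ j, |y j| + ∑ j, |x j|) * ∑ j, |y j - x j| := by
        simp only [sum_add_distrib, ← sum_mul_sum]; ring

theorem nonneg_of_hasDerivAt_of_eq_neg {ι : Type*} [Finite ι] {u u' : ℝ → ι → ℝ} {T L : ℝ}
    (hu : ∀ j, ∀ t ∈ Icc 0 T, HasDerivAt (fun s => u s j) (u' t j) t)
    (h0 : ∀ j, 0 ≤ u 0 j)
    (hL : ∀ t ∈ Ico 0 T, ∀ δ > 0, (∀ k, -δ ≤ u t k) → ∀ j, u t j = -δ → -(L * δ) ≤ u' t j) :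
    ∀ t ∈ Icc 0 T, ∀ j, 0 ≤ u t j := by
  have barrier : ∀ ε > 0, ∀ t ∈ Icc 0 T, ∀ j, 0 ≤ u t j + ε * exp ((L + 1) * t) := by
    intro ε hε
    set b : ℝ → ℝ := fun s => ε * exp ((L + 1) * s)
    have hb_pos : ∀ s, 0 < b s := fun s => mul_pos hε (exp_pos _)
    have hb : ∀ s, HasDerivAt b ((L + 1) * b s) s := fun s => by
      simpa [b, mul_comm, mul_left_comm] using
        ((hasDerivAt_id s).const_mul (L + 1)).exp.const_mul ε
    set S := {s | ∀ j, 0 ≤ u s j + b s}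
    have hw : ∀ j, ∀ x ∈ Icc 0 T, HasDerivAt (fun s => u s j + b s) (u' x j + (L + 1) * b x) x :=
      fun j x hx => (hu j x hx).add (hb x)
    have hS : IsClosed (S ∩ Icc 0 T) := by
      have hcont : ContinuousOn (fun s j => u s j + b s) (Icc 0 T) :=
        continuousOn_pi.2 fun j x hx => (hw j x hx).continuousAt.continuousWithinAt
      convert hcont.preimage_isClosed_of_isClosed isClosed_Icc (isClosed_Ici (a := 0)) using 1
      ext s
      simp [S, Pi.le_def, and_comm]
    refine hS.Icc_subset_of_forall_mem_nhdsWithin (fun j => ?_) fun x ⟨hxS, hx⟩ => ?_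
    · simpa [b] using add_pos_of_nonneg_of_pos (h0 j) hε |>.le
    have hpos : ∀ j, ∀ᶠ s in 𝓝[>] x, 0 < u s j + b s := by
      intro j
      have hd := hw j x (Ico_subset_Icc_self hx)
      rcases (hxS j).lt_or_eq with hgt | hzero
      · exact nhdsWithin_le_nhds (hd.continuousAt.eventually (lt_mem_nhds hgt))
      -- at a contact point the barrier grows faster than `u j` can decrease
      have hd_pos : 0 < u' x j + (L + 1) * b x := by
        have := hL x hx (b x) (hb_pos x) (fun k => by linarith [hxS k]) j (by linarith)
        linarith [hb_pos x]
      filter_upwards [((hasDerivAt_iff_tendsto_slope.1 hd).mono_left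
          (nhdsGT_le_nhdsNE x)).eventually (lt_mem_nhds hd_pos), self_mem_nhdsWithin]
        with s hslope hxs
      exact pos_of_slope_pos (f := fun s => u s j + b s) hxs hslope hzero.symm
    filter_upwards [eventually_all.2 hpos] with s hs j using (hs j).le
  intro t ht j
  refine le_of_forall_pos_le_add fun c hc => ?_
  have := barrier (c / exp ((L + 1) * t)) (div_pos hc (exp_pos _)) t ht j
  rwa [div_mul_cancel₀ _ (exp_ne_zero _)] at this

theorem sum_abs_le_exp_mul_of_sum_abs_deriv_le {ι : Type*} [Fintype ι] {u u' : ℝ → ι → ℝ}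
    {K T : ℝ} (hu : ∀ j, ∀ t ∈ Icc 0 T, HasDerivAt (fun s => u s j) (u' t j) t)
    (bound : ∀ t ∈ Ico 0 T, ∑ j, |u' t j| ≤ K * ∑ j, |u t j|) :
    ∀ t ∈ Icc 0 T, ∑ j, |u t j| ≤ exp (K * t) * ∑ j, |u 0 j| := by
  have hnorm : ∀ w : ι → ℝ, ‖WithLp.toLp 1 w‖ = ∑ j, |w j| := by simp [PiLp.norm_eq_of_L1]
  have hv : ∀ t ∈ Icc 0 T, HasDerivAt (fun s => WithLp.toLp 1 (u s)) (WithLp.toLp 1 (u' t)) t :=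
    fun t ht => (PiLp.continuousLinearEquiv 1 ℝ (fun _ : ι => ℝ)).symm.hasFDerivAt.comp_hasDerivAt
      t (hasDerivAt_pi.2 fun j => hu j t ht)
  intro t ht
  have := norm_le_gronwallBound_of_norm_deriv_right_le (ε := 0)
    (fun s hs => (hv s hs).continuousAt.continuousWithinAt)
    (fun s hs => (hv s (Ico_subset_Icc_self hs)).hasDerivWithinAt) le_rfl
    (fun s hs => by simpa [hnorm] using bound s hs) t ht
  rwa [gronwallBound_ε0, sub_zero, hnorm, hnorm, mul_comm] at this

section InteractionField

variable {ι : Type*} [Fintype ι] (A : ι → ι → ι → ℝ) (η ρ : ℝ)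

noncomputable def interactionField (x : ι → ℝ) (j : ι) : ℝ :=
  η * ((∑ h, ∑ k, A h k j * x h * x k) - ρ * x j)

variable {A}

theorem sum_sum_sum_mul_of_sum_eq_one (hA : ∀ h k, ∑ j, A h k j = 1) (c : ι → ι → ℝ) :
    ∑ j, ∑ h, ∑ k, A h k j * c h k = ∑ h, ∑ k, c h k := by
  rw [sum_comm]
  refine sum_congr rfl fun h _ => ?_
  rw [sum_comm]
  simp only [← sum_mul, hA, one_mul]

theorem sum_interactionField (hA : ∀ h k, ∑ j, A h k j = 1) (x : ι → ℝ) :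
    ∑ j, interactionField A η ρ x j = η * (∑ j, x j) * (∑ j, x j - ρ) := by
  have hgain : ∑ j, ∑ h, ∑ k, A h k j * x h * x k = (∑ j, x j) * ∑ j, x j := by
    simp only [mul_assoc]
    rw [sum_sum_sum_mul_of_sum_eq_one hA, sum_mul_sum]
  simp only [interactionField, ← mul_sum, sum_sub_distrib, hgain]
  ring

theorem sum_abs_interactionField_sub_le (hA0 : ∀ h k j, 0 ≤ A h k j)
    (hA : ∀ h k, ∑ j, A h k j = 1) (x y : ι → ℝ) :
    ∑ j, |interactionField A η ρ y j - interactionField A η ρ x j|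
      ≤ |η| * (∑ j, |y j| + ∑ j, |x j| + |ρ|) * ∑ j, |y j - x j| := by
  have hgain : ∑ j, |(∑ h, ∑ k, A h k j * y h * y k) - ∑ h, ∑ k, A h k j * x h * x k|
      ≤ ∑ h, ∑ k, |y h * y k - x h * x k| :=
    calc _ ≤ ∑ j, ∑ h, ∑ k, A h k j * |y h * y k - x h * x k| := by
          gcongr with j _
          simp only [← sum_sub_distrib]
          refine (abs_sum_le_sum_abs _ _).trans (sum_le_sum fun h _ => ?_)
          refine (abs_sum_le_sum_abs _ _).trans_eq (sum_congr rfl fun k _ => ?_)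
          rw [mul_assoc, mul_assoc, ← mul_sub, abs_mul, abs_of_nonneg (hA0 h k j)]
      _ = ∑ h, ∑ k, |y h * y k - x h * x k| := sum_sum_sum_mul_of_sum_eq_one hA _
  calc ∑ j, |interactionField A η ρ y j - interactionField A η ρ x j|
      ≤ ∑ j, |η| * (|(∑ h, ∑ k, A h k j * y h * y k) - ∑ h, ∑ k, A h k j * x h * x k|
          + |ρ| * |y j - x j|) := by
        gcongr with j _
        rw [interactionField, interactionField, ← mul_sub, abs_mul]
        gcongr
        calc _ = |((∑ h, ∑ k, A h k j * y h * y k) - ∑ h, ∑ k, A h k j * x h * x k)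
              - ρ * (y j - x j)| := by ring_nf
          _ ≤ _ := (abs_sub _ _).trans_eq (by rw [abs_mul])
    _ ≤ |η| * ((∑ j, |y j| + ∑ j, |x j|) * ∑ j, |y j - x j| + |ρ| * ∑ j, |y j - x j|) := by
        rw [← mul_sum, sum_add_distrib, ← mul_sum]
        gcongr
        exact hgain.trans (sum_abs_mul_sub_mul_le x y)
    _ = |η| * (∑ j, |y j| + ∑ j, |x j| + |ρ|) * ∑ j, |y j - x j| := by ring

theorem neg_le_interactionField_of_eq_neg (hA0 : ∀ h k j, 0 ≤ A h k j) (hA1 : ∀ h k j, A h k j ≤ 1)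
    (hη : 0 ≤ η) (hρ : 0 ≤ ρ) {x : ι → ℝ} {B δ : ℝ} (hδ : 0 ≤ δ) (hB : ∀ k, |x k| ≤ B)
    (hx : ∀ k, -δ ≤ x k) {j : ι} (hj : x j = -δ) :
    -(η * Fintype.card ι ^ 2 * B * δ) ≤ interactionField A η ρ x j := by
  have hgain : -(Fintype.card ι ^ 2 * (B * δ)) ≤ ∑ h, ∑ k, A h k j * x h * x k := by
    calc -(Fintype.card ι ^ 2 * (B * δ)) = ∑ h : ι, ∑ k : ι, -(B * δ) := by
          simp [sq]; ring
      _ ≤ _ := by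
          gcongr with h _ k _
          exact neg_mul_le_mul_mul_of_neg_le (hA0 h k j) (hA1 h k j) hδ (hx h) (hx k) (hB h) (hB k)
  rw [interactionField, hj]
  nlinarith [mul_nonneg hρ hδ]

variable {f : ℝ → ι → ℝ}
  (hf : ∀ j, ∀ t, 0 ≤ t → HasDerivAt (fun s => f s j) (interactionField A η ρ (f t) j) t)
include hf

theorem sum_eq_of_hasDerivAt_interactionField (hA : ∀ h k, ∑ j, A h k j = 1)
    (h0 : ∑ j, f 0 j = ρ) {t : ℝ} (ht : 0 ≤ t) : ∑ j, f t j = ρ := by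
  set m : ℝ → ℝ := fun s => ∑ j, f s j
  have hm : ∀ s, 0 ≤ s → HasDerivAt m (η * m s * (m s - ρ)) s := fun s hs => by
    rw [← sum_interactionField η ρ hA]
    exact HasDerivAt.fun_sum fun j _ => hf j s hs
  have hcont : ContinuousOn m (Icc 0 t) := fun s hs => (hm s hs.1).continuousAt.continuousWithinAt
  obtain ⟨K, hK⟩ := isCompact_Icc.exists_bound_of_continuousOn hcont
  have hzero := eq_zero_of_abs_deriv_le_mul_abs_self_of_eq_zero_right (K := |η| * K)
    (hcont.sub continuousOn_const) (fun s hs => ((hm s hs.1).sub_const ρ).hasDerivWithinAt)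
    (by simp [m, h0]) (fun s hs => ?_) t ⟨ht, le_rfl⟩
  · exact sub_eq_zero.1 hzero
  rw [norm_mul, norm_mul, Real.norm_eq_abs η]
  exact mul_le_mul_of_nonneg_right
    (mul_le_mul_of_nonneg_left (hK s (Ico_subset_Icc_self hs)) (abs_nonneg η)) (norm_nonneg _)

theorem nonneg_of_hasDerivAt_interactionField (hA0 : ∀ h k j, 0 ≤ A h k j)
    (hA1 : ∀ h k j, A h k j ≤ 1) (hη : 0 ≤ η) (hρ : 0 ≤ ρ) (h0 : ∀ j, 0 ≤ f 0 j)
    {t : ℝ} (ht : 0 ≤ t) (j : ι) : 0 ≤ f t j := by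
  obtain ⟨B, hB⟩ := isCompact_Icc.exists_bound_of_continuousOn (s := Icc 0 t) (f := f)
    (continuousOn_pi.2 fun j s hs => (hf j s hs.1).continuousAt.continuousWithinAt)
  refine nonneg_of_hasDerivAt_of_eq_neg (L := η * Fintype.card ι ^ 2 * B)
    (fun j s hs => hf j s hs.1) h0 (fun s hs δ hδ hx j hj => ?_) t ⟨ht, le_rfl⟩ j
  exact neg_le_interactionField_of_eq_neg η ρ hA0 hA1 hη hρ hδ.le
    (fun k => (norm_le_pi_norm (f s) k).trans (hB s (Ico_subset_Icc_self hs))) hx hj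

theorem sum_abs_eq_of_hasDerivAt_interactionField (hA0 : ∀ h k j, 0 ≤ A h k j)
    (hA1 : ∀ h k j, A h k j ≤ 1) (hA : ∀ h k, ∑ j, A h k j = 1) (hη : 0 ≤ η) (hρ : 0 ≤ ρ)
    (h0 : ∀ j, 0 ≤ f 0 j) (h0_sum : ∑ j, f 0 j = ρ) : ∀ t, 0 ≤ t → ∑ j, |f t j| = ρ := by
  intro t ht
  rw [← sum_eq_of_hasDerivAt_interactionField η ρ hf hA h0_sum ht]
  exact sum_congr rfl fun j _ =>
    abs_of_nonneg (nonneg_of_hasDerivAt_interactionField η ρ hf hA0 hA1 hη hρ h0 ht j)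

end InteractionField

theorem a_priori_continuity_estimate_general
    (n : ℕ) (ρ : ℝ) (hρ0 : 0 ≤ ρ) (hρ1 : ρ ≤ 1)
    (ηρ η₀ : ℝ) (hηρ : 0 ≤ ηρ) (hηρ₀ : ηρ ≤ η₀)
    (A : Fin n → Fin n → Fin n → ℝ)
    (hA_nonneg : ∀ h k j, 0 ≤ A h k j) (hA_le : ∀ h k j, A h k j ≤ 1)
    (hA_sum : ∀ h k, ∑ j, A h k j = 1)
    (f g : ℝ → Fin n → ℝ)
    (hf : ∀ j : Fin n, ∀ t : ℝ, 0 ≤ t →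
      HasDerivAt (fun s => f s j)
        (ηρ * ((∑ h, ∑ k, A h k j * f t h * f t k) - ρ * f t j)) t)
    (hg : ∀ j : Fin n, ∀ t : ℝ, 0 ≤ t →
      HasDerivAt (fun s => g s j)
        (ηρ * ((∑ h, ∑ k, A h k j * g t h * g t k) - ρ * g t j)) t)
    (hf0_nonneg : ∀ j, 0 ≤ f 0 j) (hg0_nonneg : ∀ j, 0 ≤ g 0 j)
    (hf0_mass : ∑ j, f 0 j = ρ) (hg0_mass : ∑ j, g 0 j = ρ) :
    ∀ t : ℝ, 0 < t →
      ∑ j, |g t j - f t j| ≤ Real.exp (3 * η₀ * t) * ∑ j, |g 0 j - f 0 j| := by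
  intro t ht
  have hf_mass := sum_abs_eq_of_hasDerivAt_interactionField ηρ ρ hf hA_nonneg hA_le hA_sum hηρ hρ0
    hf0_nonneg hf0_mass
  have hg_mass := sum_abs_eq_of_hasDerivAt_interactionField ηρ ρ hg hA_nonneg hA_le hA_sum hηρ hρ0
    hg0_nonneg hg0_mass
  refine sum_abs_le_exp_mul_of_sum_abs_deriv_le
    (u' := fun s j => interactionField A ηρ ρ (g s) j - interactionField A ηρ ρ (f s) j)
    (fun j s hs => (hg j s hs.1).sub (hf j s hs.1)) (fun s hs => ?_) t ⟨ht.le, le_rfl⟩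
  calc _ ≤ |ηρ| * (∑ j, |g s j| + ∑ j, |f s j| + |ρ|) * ∑ j, |g s j - f s j| :=
        sum_abs_interactionField_sub_le ηρ ρ hA_nonneg hA_sum (f s) (g s)
    _ = 3 * (ηρ * ρ) * ∑ j, |g s j - f s j| := by
        rw [hf_mass s hs.1, hg_mass s hs.1, abs_of_nonneg hηρ, abs_of_nonneg hρ0]
        ring
    _ ≤ 3 * η₀ * ∑ j, |g s j - f s j| := by
        gcongr
        exact (mul_le_of_le_one_right hηρ hρ1).trans hηρ₀

/-- a priori continuity estimate. Two solutions of the spatially homogeneous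
system with the same density `ρ` satisfy `‖g(t) − f(t)‖₁ ≤ e^{3η₀ t} ‖g⁰ − f⁰‖₁`, where `η₀`
bounds the interaction rate. -/
theorem a_priori_continuity_estimate
    (n : ℕ) (hn : 1 ≤ n) (ρ : ℝ) (hρ0 : 0 ≤ ρ) (hρ1 : ρ ≤ 1)
    (ηρ η₀ : ℝ) (hηρ : 0 ≤ ηρ) (hηρ₀ : ηρ ≤ η₀)
    (A : Fin n → Fin n → Fin n → ℝ)
    (hA_nonneg : ∀ h k j, 0 ≤ A h k j) (hA_le : ∀ h k j, A h k j ≤ 1)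
    (hA_sum : ∀ h k, ∑ j, A h k j = 1)
    (f g : ℝ → Fin n → ℝ)
    (hf : ∀ j : Fin n, ∀ t : ℝ, 0 ≤ t →
      HasDerivAt (fun s => f s j)
        (ηρ * ((∑ h, ∑ k, A h k j * f t h * f t k) - ρ * f t j)) t)
    (hg : ∀ j : Fin n, ∀ t : ℝ, 0 ≤ t →
      HasDerivAt (fun s => g s j)
        (ηρ * ((∑ h, ∑ k, A h k j * g t h * g t k) - ρ * g t j)) t)
    (hf0_nonneg : ∀ j, 0 ≤ f 0 j) (hg0_nonneg : ∀ j, 0 ≤ g 0 j)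
    (hf0_mass : ∑ j, f 0 j = ρ) (hg0_mass : ∑ j, g 0 j = ρ) :
    ∀ t : ℝ, 0 < t →
      ∑ j, |g t j - f t j| ≤ Real.exp (3 * η₀ * t) * ∑ j, |g 0 j - f 0 j| :=
  a_priori_continuity_estimate_general n ρ hρ0 hρ1 ηρ η₀ hηρ hηρ₀ A hA_nonneg hA_le hA_sum f g hf hg
    hf0_nonneg hg0_nonneg hf0_mass hg0_mass
end
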